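/- Let 0 < β ≤ γ ≤ 1. There exists a constant C depending only on β and γ such that for every t ∈ (0,1], every d ≥ 1 and every bounded continuous 2π-periodic function u₀ : ℝ → ℝ^d with finite β-Hölder seminorm ‖u₀‖_β := sup_{x≠y} ‖u₀(x)−u₀(y)‖/|x−y|^β, the function S_t u₀ given by (S_t u₀)(x) := ∫₀^{2π} p_t(x−y) u₀(y) dy satisfies sup_{x≠y∈ℝ} ‖(S_t u₀)(x) − (S_t u₀)(y)‖/|x−y|^γ ≤ C t^{−(γ−β)/2} ( ‖u₀‖_∞ + ‖u₀‖_β ). -/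

import Mathlib

/-!
On the line, `S_t` is convolution with the Gaussian density `g_t` of variance `t`: cutting `ℝ`
into periods and using the periodicity of `u₀` turns `∫_ℝ g_t(x - z) u₀(z) dz` into the integral
of the periodised kernel `p_t` over one period.

Convolution with a probability density does not increase the `β`-Hölder seminorm `H`, so
`‖S_t u₀ x - S_t u₀ y‖ ≤ H |x - y|^β`. For `|x - y| ≤ √t` we use the mean value theorem instead:
after subtracting the constant `u₀ x`, the derivative of `S_t u₀` at a point `s` with
`|s - x| ≤ √t` is `∫ ∂g_t(s - z) (u₀ z - u₀ x) dz`, and the Gaussian moments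
`∫ |z|^p g_t(z) dz ≤ 6 t^{p/2}` (`0 ≤ p ≤ 2`, from `|z|^p g_t ≤ 6 t^{p/2} g_{2t}`) bound it by
`12 H t^{(β-1)/2}`. Interpolating between the two bounds at the scale `|x - y| = √t` gives the
claim with `C = 12`.
-/

open MeasureTheory

/-- The `2π`-periodic heat kernel `p_t(x) = (2πt)^{-1/2} Σ_{n∈ℤ} exp(-(x-2πn)²/(2t))`. -/
noncomputable def heatKernel (t x : ℝ) : ℝ :=
  (1 / Real.sqrt (2 * Real.pi * t)) *
    ∑' n : ℤ, Real.exp (-(x - 2 * Real.pi * n) ^ 2 / (2 * t))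

/-- The periodic heat semigroup `(S_t u₀)(x) = ∫₀^{2π} p_t(x-y) u₀(y) dy`. -/
noncomputable def heatSemigroup {d : ℕ} (t : ℝ) (u₀ : ℝ → EuclideanSpace ℝ (Fin d)) (x : ℝ) :
    EuclideanSpace ℝ (Fin d) :=
  ∫ y in (0 : ℝ)..(2 * Real.pi), heatKernel t (x - y) • u₀ y

/-- The `β`-Hölder seminorm of a function on the whole line. -/
noncomputable def holderR (β : ℝ) {E : Type*} [NormedAddCommGroup E] (v : ℝ → E) : ℝ :=
  ⨆ p : {q : ℝ × ℝ // q.1 ≠ q.2}, ‖v p.1.1 - v p.1.2‖ / |p.1.1 - p.1.2| ^ β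

open Real ProbabilityTheory ContinuousLinearMap
open scoped NNReal Convolution

lemma rpow_half_le_one_add {q p : ℝ} (hq : 0 ≤ q) (hp0 : 0 ≤ p) (hp2 : p ≤ 2) :
    q ^ (p / 2) ≤ 1 + q := by
  rcases le_total q 1 with h | h
  · linarith [rpow_le_one hq h (by positivity : 0 ≤ p / 2)]
  · linarith [rpow_le_self_of_one_le h (by linarith : p / 2 ≤ 1)]

lemma abs_rpow_mul_exp_neg_sq_le {t p : ℝ} (ht : 0 < t) (hp0 : 0 ≤ p) (hp2 : p ≤ 2) (z : ℝ) :
    |z| ^ p * exp (-z ^ 2 / (4 * t)) ≤ 4 * t ^ (p / 2) := by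
  set q := z ^ 2 / t with hq
  have hq0 : 0 ≤ q := by positivity
  have hz : |z| ^ p = t ^ (p / 2) * q ^ (p / 2) := by
    rw [← mul_rpow ht.le hq0, hq, mul_div_cancel₀ _ ht.ne', ← sq_abs, ← rpow_natCast,
      ← rpow_mul (abs_nonneg z)]
    ring_nf
  have hexp : exp (-z ^ 2 / (4 * t)) = exp (-(q / 4)) := by rw [hq]; congr 1; ring
  -- `1 + q ≤ 4 (1 + q/4) ≤ 4 e^{q/4}`
  have hdecay : (1 + q) * exp (-(q / 4)) ≤ 4 := by
    rw [exp_neg, ← div_eq_mul_inv, div_le_iff₀ (exp_pos _)]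
    linarith [add_one_le_exp (q / 4)]
  calc |z| ^ p * exp (-z ^ 2 / (4 * t))
      ≤ t ^ (p / 2) * (1 + q) * exp (-(q / 4)) := by
        rw [hz, hexp]
        gcongr
        exact rpow_half_le_one_add hq0 hp0 hp2
    _ ≤ 4 * t ^ (p / 2) := by nlinarith [rpow_nonneg ht.le (p / 2)]

lemma gaussianPDFReal_zero_two_mul (v : ℝ≥0) (z : ℝ) :
    gaussianPDFReal 0 (2 * v) z = (√2)⁻¹ * (√(2 * π * v))⁻¹ * exp (-z ^ 2 / (4 * v)) := by
  rw [gaussianPDFReal, sub_zero, NNReal.coe_mul, NNReal.coe_ofNat,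
    show 2 * π * (2 * (v : ℝ)) = 2 * (2 * π * v) by ring, sqrt_mul zero_le_two, mul_inv,
    show 2 * (2 * (v : ℝ)) = 4 * v by ring]

lemma gaussianPDFReal_zero_eq_mul (v : ℝ≥0) (z : ℝ) :
    gaussianPDFReal 0 v z = √2 * exp (-z ^ 2 / (4 * v)) * gaussianPDFReal 0 (2 * v) z := by
  have hexp : exp (-z ^ 2 / (2 * v)) = exp (-z ^ 2 / (4 * v)) * exp (-z ^ 2 / (4 * v)) := by
    rw [← exp_add]; ring_nf
  rw [gaussianPDFReal_zero_two_mul, gaussianPDFReal, sub_zero, hexp]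
  field_simp

lemma abs_rpow_mul_gaussianPDFReal_le {v : ℝ≥0} (hv : v ≠ 0) {p : ℝ} (hp0 : 0 ≤ p)
    (hp2 : p ≤ 2) (z : ℝ) :
    |z| ^ p * gaussianPDFReal 0 v z ≤ 6 * (v : ℝ) ^ (p / 2) * gaussianPDFReal 0 (2 * v) z := by
  have hsqrt2 : √2 * 4 ≤ 6 := by nlinarith [sq_sqrt (zero_le_two : (0 : ℝ) ≤ 2), sqrt_nonneg 2]
  have hmoment := abs_rpow_mul_exp_neg_sq_le (by positivity : (0 : ℝ) < v) hp0 hp2 z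
  calc |z| ^ p * gaussianPDFReal 0 v z
      = √2 * (|z| ^ p * exp (-z ^ 2 / (4 * v))) * gaussianPDFReal 0 (2 * v) z := by
        rw [gaussianPDFReal_zero_eq_mul]; ring
    _ ≤ √2 * (4 * (v : ℝ) ^ (p / 2)) * gaussianPDFReal 0 (2 * v) z := by
        gcongr
        exact gaussianPDFReal_nonneg _ _ _
    _ ≤ 6 * (v : ℝ) ^ (p / 2) * gaussianPDFReal 0 (2 * v) z := by
        rw [← mul_assoc]
        gcongr
        exact gaussianPDFReal_nonneg _ _ _

lemma integrable_abs_rpow_mul_gaussianPDFReal {v : ℝ≥0} (hv : v ≠ 0) {p : ℝ} (hp0 : 0 ≤ p)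
    (hp2 : p ≤ 2) : Integrable (fun z => |z| ^ p * gaussianPDFReal 0 v z) := by
  refine ((integrable_gaussianPDFReal 0 (2 * v)).const_mul (6 * (v : ℝ) ^ (p / 2))).mono'
    ((continuous_abs.rpow_const fun _ => Or.inr hp0).measurable.mul
      (measurable_gaussianPDFReal 0 v)).aestronglyMeasurable (ae_of_all _ fun z => ?_)
  rw [norm_of_nonneg (mul_nonneg (by positivity) (gaussianPDFReal_nonneg _ _ _))]
  exact abs_rpow_mul_gaussianPDFReal_le hv hp0 hp2 z

lemma integral_abs_rpow_mul_gaussianPDFReal_le {v : ℝ≥0} (hv : v ≠ 0) {p : ℝ} (hp0 : 0 ≤ p)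
    (hp2 : p ≤ 2) : ∫ z, |z| ^ p * gaussianPDFReal 0 v z ≤ 6 * (v : ℝ) ^ (p / 2) := by
  calc ∫ z, |z| ^ p * gaussianPDFReal 0 v z
      ≤ ∫ z, 6 * (v : ℝ) ^ (p / 2) * gaussianPDFReal 0 (2 * v) z :=
        integral_mono (integrable_abs_rpow_mul_gaussianPDFReal hv hp0 hp2)
          ((integrable_gaussianPDFReal 0 _).const_mul _)
          (abs_rpow_mul_gaussianPDFReal_le hv hp0 hp2)
    _ = 6 * (v : ℝ) ^ (p / 2) := by
        rw [integral_const_mul, integral_gaussianPDFReal_eq_one 0 (by simpa using hv), mul_one]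

lemma hasDerivAt_gaussianPDFReal_zero (v : ℝ≥0) (x : ℝ) :
    HasDerivAt (gaussianPDFReal 0 v) (-(x / v) * gaussianPDFReal 0 v x) x := by
  have hexponent : HasDerivAt (fun y : ℝ => -y ^ 2 / (2 * v)) (-(2 * x) / (2 * v)) x := by
    simpa using (hasDerivAt_pow 2 x).neg.div_const (2 * (v : ℝ))
  simp only [gaussianPDFReal_def, sub_zero]
  refine (hexponent.exp.const_mul (√(2 * π * v))⁻¹).congr_deriv ?_
  ring

lemma continuous_gaussianPDFReal_zero (v : ℝ≥0) : Continuous (gaussianPDFReal 0 v) :=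
  continuous_iff_continuousAt.2 fun x => (hasDerivAt_gaussianPDFReal_zero v x).continuousAt

lemma gaussianPDFReal_le_of_abs_sub_le_one {v : ℝ≥0} (hv : v ≠ 0) {a b : ℝ} (hab : |a - b| ≤ 1) :
    gaussianPDFReal 0 v a ≤ √2 * exp (1 / (2 * v)) * gaussianPDFReal 0 (2 * v) b := by
  have hv' : (0 : ℝ) < v := by positivity
  have hsq : b ^ 2 ≤ 2 * a ^ 2 + 2 := by
    nlinarith [sq_abs (a - b), abs_nonneg (a - b), sq_nonneg (a + (a - b))]
  have hexp : exp (-a ^ 2 / (2 * v)) ≤ exp (1 / (2 * v)) * exp (-b ^ 2 / (4 * v)) := by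
    have hgap : 1 / (2 * v) + -b ^ 2 / (4 * v) - -a ^ 2 / (2 * v)
        = (2 + 2 * a ^ 2 - b ^ 2) / (4 * v) := by
      field_simp; ring
    rw [← exp_add, exp_le_exp, ← sub_nonneg, hgap]
    exact div_nonneg (by linarith) (by positivity)
  rw [gaussianPDFReal_zero_two_mul, gaussianPDFReal, sub_zero]
  calc (√(2 * π * v))⁻¹ * exp (-a ^ 2 / (2 * v))
      ≤ (√(2 * π * v))⁻¹ * (exp (1 / (2 * v)) * exp (-b ^ 2 / (4 * v))) := by gcongr
    _ = √2 * exp (1 / (2 * v)) * ((√2)⁻¹ * (√(2 * π * v))⁻¹ * exp (-b ^ 2 / (4 * v))) := by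
        field_simp

lemma abs_mul_gaussianPDFReal_le_of_abs_sub_le_one {v : ℝ≥0} (hv : v ≠ 0) {a b : ℝ}
    (hab : |a - b| ≤ 1) :
    |a| * gaussianPDFReal 0 v a ≤
      6 * √v * (√2 * exp (1 / (4 * v))) * gaussianPDFReal 0 (2 * (2 * v)) b := by
  have hmoment := abs_rpow_mul_gaussianPDFReal_le hv zero_le_one one_le_two a
  rw [rpow_one, ← sqrt_eq_rpow] at hmoment
  have hshift := gaussianPDFReal_le_of_abs_sub_le_one (mul_ne_zero two_ne_zero hv) hab
  rw [NNReal.coe_mul, NNReal.coe_ofNat, ← mul_assoc, show (2 : ℝ) * 2 = 4 by norm_num] at hshift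
  calc |a| * gaussianPDFReal 0 v a ≤ 6 * √v * gaussianPDFReal 0 (2 * v) a := hmoment
    _ ≤ _ := by rw [mul_assoc _ (√2 * _)]; gcongr

section

variable {E : Type*} [NormedAddCommGroup E] [NormedSpace ℝ E]

lemma norm_convolution_sub_le {k : ℝ → ℝ} (hk : Integrable k) (hk0 : 0 ≤ k) (hk1 : ∫ z, k z = 1)
    {u : ℝ → E} (hu : Continuous u) {M : ℝ} (hM : ∀ z, ‖u z‖ ≤ M) {x y C : ℝ}
    (hC : ∀ z, ‖u (x - z) - u (y - z)‖ ≤ C) :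
    ‖(k ⋆[lsmul ℝ ℝ] u) x - (k ⋆[lsmul ℝ ℝ] u) y‖ ≤ C := by
  have hint : ∀ s, Integrable (fun z => k z • u (s - z)) := fun s =>
    hk.smul_bdd M (hu.comp (continuous_sub_left s)).aestronglyMeasurable (ae_of_all _ fun z => hM _)
  rw [convolution_lsmul, convolution_lsmul, ← integral_sub (hint x) (hint y)]
  calc ‖∫ z, k z • u (x - z) - k z • u (y - z)‖ ≤ ∫ z, k z * C := by
        refine norm_integral_le_of_norm_le (hk.mul_const C) (ae_of_all _ fun z => ?_)
        rw [← smul_sub, norm_smul, norm_of_nonneg (hk0 z)]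
        exact mul_le_mul_of_nonneg_left (hC z) (hk0 z)
    _ = C := by rw [integral_mul_const, hk1, one_mul]

lemma convolution_sub_const [CompleteSpace E] {k : ℝ → ℝ} (hk : Integrable k) (hk1 : ∫ z, k z = 1)
    {u : ℝ → E} (hu : Continuous u) {M : ℝ} (hM : ∀ z, ‖u z‖ ≤ M) (c : E) (x : ℝ) :
    (k ⋆[lsmul ℝ ℝ] fun z => u z - c) x = (k ⋆[lsmul ℝ ℝ] u) x - c := by
  have hint : Integrable (fun z => k z • u (x - z)) :=
    hk.smul_bdd M (hu.comp (continuous_sub_left x)).aestronglyMeasurable (ae_of_all _ fun z => hM _)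
  simp only [convolution_lsmul, smul_sub]
  rw [integral_sub hint (hk.smul_const c), integral_smul_const, hk1, one_smul]

lemma hasDerivAt_gaussianPDFReal_convolution {v : ℝ≥0} (hv : v ≠ 0) {u : ℝ → E}
    (hu : Continuous u) {M : ℝ} (hM : ∀ z, ‖u z‖ ≤ M) (s₀ : ℝ) :
    HasDerivAt (gaussianPDFReal 0 v ⋆[lsmul ℝ ℝ] u)
      (∫ z, (-((s₀ - z) / v) * gaussianPDFReal 0 v (s₀ - z)) • u z) s₀ := by
  have hcont := continuous_gaussianPDFReal_zero v
  set C := 6 * √v * (√2 * exp (1 / (4 * v))) / v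
  have hF : (gaussianPDFReal 0 v ⋆[lsmul ℝ ℝ] u) =
      fun s => ∫ z, gaussianPDFReal 0 v (s - z) • u z := funext fun s => convolution_lsmul_swap
  rw [hF]
  refine (hasDerivAt_integral_of_dominated_loc_of_deriv_le (𝕜 := ℝ)
    (F' := fun s z => (-((s - z) / v) * gaussianPDFReal 0 v (s - z)) • u z)
    (bound := fun z => C * gaussianPDFReal 0 (2 * (2 * v)) (s₀ - z) * M)
    (Metric.ball_mem_nhds s₀ one_pos) ?_ ?_ ?_ ?_ ?_ ?_).2
  · exact Filter.Eventually.of_forall fun s =>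
      ((hcont.comp (continuous_sub_left s)).smul hu).aestronglyMeasurable
  · exact ((integrable_gaussianPDFReal 0 v).comp_sub_left s₀).smul_bdd M hu.aestronglyMeasurable
      (ae_of_all _ hM)
  · exact (((continuous_sub_left s₀).div_const _).neg.mul
      (hcont.comp (continuous_sub_left s₀))).smul hu |>.aestronglyMeasurable
  · refine ae_of_all _ fun z s hs => ?_
    rw [norm_smul, norm_mul, norm_neg, norm_div, Real.norm_eq_abs, Real.norm_eq_abs,
      Real.norm_eq_abs, NNReal.abs_eq, abs_of_nonneg (gaussianPDFReal_nonneg _ _ _)]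
    have hshift : |(s - z) - (s₀ - z)| ≤ 1 := by
      rw [sub_sub_sub_cancel_right]; exact (Metric.mem_ball.mp hs).le
    calc |s - z| / v * gaussianPDFReal 0 v (s - z) * ‖u z‖
        = |s - z| * gaussianPDFReal 0 v (s - z) / v * ‖u z‖ := by ring
      _ ≤ 6 * √v * (√2 * exp (1 / (4 * v))) * gaussianPDFReal 0 (2 * (2 * v)) (s₀ - z) / v *
            M := by
        refine mul_le_mul (div_le_div_of_nonneg_right
          (abs_mul_gaussianPDFReal_le_of_abs_sub_le_one hv hshift) v.2) (hM z) (norm_nonneg _)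
          (div_nonneg (mul_nonneg (by positivity) (gaussianPDFReal_nonneg _ _ _)) v.2)
      _ = C * gaussianPDFReal 0 (2 * (2 * v)) (s₀ - z) * M := by ring
  · exact (((integrable_gaussianPDFReal 0 _).comp_sub_left s₀).const_mul C).mul_const M
  · exact ae_of_all _ fun z s _ =>
      ((hasDerivAt_gaussianPDFReal_zero v (s - z)).comp_sub_const s z).smul_const (u z)

lemma norm_deriv_gaussianPDFReal_smul_le {v : ℝ≥0} (hv : v ≠ 0) {β H : ℝ} (hβ0 : 0 ≤ β)
    (hβ1 : β ≤ 1) (hH : 0 ≤ H) {w : ℝ → E} {x s : ℝ} (hw : ∀ z, ‖w z‖ ≤ H * |z - x| ^ β)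
    (hs : |s - x| ≤ √v) (z : ℝ) :
    ‖(-((s - z) / v) * gaussianPDFReal 0 v (s - z)) • w z‖ ≤
      H / v * (|s - z| ^ (1 + β) * gaussianPDFReal 0 v (s - z) +
        (v : ℝ) ^ (β / 2) * (|s - z| ^ (1 : ℝ) * gaussianPDFReal 0 v (s - z))) := by
  have hv' : (0 : ℝ) < v := by positivity
  have hsx : |s - x| ^ β ≤ (v : ℝ) ^ (β / 2) := by
    calc |s - x| ^ β ≤ √v ^ β := rpow_le_rpow (abs_nonneg _) hs hβ0
      _ = (v : ℝ) ^ (β / 2) := by rw [sqrt_eq_rpow, ← rpow_mul hv'.le]; ring_nf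
  have hzx : |z - x| ^ β ≤ |s - z| ^ β + (v : ℝ) ^ (β / 2) :=
    calc |z - x| ^ β ≤ (|s - z| + |s - x|) ^ β := by
          refine rpow_le_rpow (abs_nonneg _) ?_ hβ0
          rw [abs_sub_comm s z]; exact abs_sub_le z s x
      _ ≤ |s - z| ^ β + |s - x| ^ β := rpow_add_le_add_rpow (abs_nonneg _) (abs_nonneg _) hβ0 hβ1
      _ ≤ |s - z| ^ β + (v : ℝ) ^ (β / 2) := by gcongr
  have hK : 0 ≤ gaussianPDFReal 0 v (s - z) := gaussianPDFReal_nonneg _ _ _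
  rw [norm_smul, norm_mul, norm_neg, norm_div, Real.norm_eq_abs, Real.norm_eq_abs,
    Real.norm_eq_abs, NNReal.abs_eq, abs_of_nonneg hK, rpow_add' (abs_nonneg _) (by linarith),
    rpow_one]
  calc |s - z| / v * gaussianPDFReal 0 v (s - z) * ‖w z‖
      ≤ |s - z| / v * gaussianPDFReal 0 v (s - z) * (H * |z - x| ^ β) := by gcongr; exact hw z
    _ ≤ |s - z| / v * gaussianPDFReal 0 v (s - z) * (H * (|s - z| ^ β + (v : ℝ) ^ (β / 2))) := by
        gcongr
    _ = _ := by ring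

lemma norm_integral_deriv_gaussianPDFReal_smul_le {v : ℝ≥0} (hv : v ≠ 0) {β H : ℝ}
    (hβ0 : 0 ≤ β) (hβ1 : β ≤ 1) (hH : 0 ≤ H) {w : ℝ → E} {x s : ℝ}
    (hw : ∀ z, ‖w z‖ ≤ H * |z - x| ^ β) (hs : |s - x| ≤ √v) :
    ‖∫ z, (-((s - z) / v) * gaussianPDFReal 0 v (s - z)) • w z‖ ≤
      12 * H * (v : ℝ) ^ ((β - 1) / 2) := by
  have hv' : (0 : ℝ) < v := by positivity
  set K := gaussianPDFReal 0 v
  have hmoment : ∀ p : ℝ, 0 ≤ p → p ≤ 2 → Integrable (fun z => |s - z| ^ p * K (s - z)) ∧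
      ∫ z, |s - z| ^ p * K (s - z) ≤ 6 * (v : ℝ) ^ (p / 2) := fun p hp0 hp2 =>
    ⟨(integrable_abs_rpow_mul_gaussianPDFReal hv hp0 hp2).comp_sub_left s,
      (integral_sub_left_eq_self (fun z => |z| ^ p * K z) volume s).trans_le
        (integral_abs_rpow_mul_gaussianPDFReal_le hv hp0 hp2)⟩
  obtain ⟨hint₁, hI₁⟩ := hmoment (1 + β) (by linarith) (by linarith)
  obtain ⟨hint₂, hI₂⟩ := hmoment 1 zero_le_one one_le_two
  calc ‖∫ z, (-((s - z) / v) * K (s - z)) • w z‖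
      ≤ ∫ z, H / v * (|s - z| ^ (1 + β) * K (s - z) +
          (v : ℝ) ^ (β / 2) * (|s - z| ^ (1 : ℝ) * K (s - z))) :=
        norm_integral_le_of_norm_le ((hint₁.add (hint₂.const_mul _)).const_mul _)
          (ae_of_all _ (norm_deriv_gaussianPDFReal_smul_le hv hβ0 hβ1 hH hw hs))
    _ = H / v * ((∫ z, |s - z| ^ (1 + β) * K (s - z)) +
          (v : ℝ) ^ (β / 2) * ∫ z, |s - z| ^ (1 : ℝ) * K (s - z)) := by
        rw [integral_const_mul, integral_add hint₁ (hint₂.const_mul _), integral_const_mul]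
    _ ≤ H / v * (6 * (v : ℝ) ^ ((1 + β) / 2) +
          (v : ℝ) ^ (β / 2) * (6 * (v : ℝ) ^ ((1 : ℝ) / 2))) := by
        gcongr
    _ = 12 * H * (v : ℝ) ^ ((β - 1) / 2) := by
        rw [mul_left_comm, ← rpow_add hv', show (β - 1) / 2 = (1 + β) / 2 - 1 by ring,
          rpow_sub_one hv'.ne']
        ring_nf

lemma norm_gaussianPDFReal_convolution_sub_le_of_abs_sub_le_sqrt [CompleteSpace E] {v : ℝ≥0}
    (hv : v ≠ 0)
    {β H : ℝ} (hβ0 : 0 ≤ β) (hβ1 : β ≤ 1) (hH : 0 ≤ H) {u : ℝ → E} (hu : Continuous u)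
    {M : ℝ} (hM : ∀ z, ‖u z‖ ≤ M) (hHol : ∀ a b, ‖u a - u b‖ ≤ H * |a - b| ^ β) {x y : ℝ}
    (hxy : |x - y| ≤ √v) :
    ‖(gaussianPDFReal 0 v ⋆[lsmul ℝ ℝ] u) x - (gaussianPDFReal 0 v ⋆[lsmul ℝ ℝ] u) y‖ ≤
      12 * H * (v : ℝ) ^ ((β - 1) / 2) * |x - y| := by
  have hK := integrable_gaussianPDFReal 0 v
  have hK1 := integral_gaussianPDFReal_eq_one 0 hv
  set w := fun z => u z - u x
  have hwM : ∀ z, ‖w z‖ ≤ M + M := fun z => (norm_sub_le _ _).trans (add_le_add (hM z) (hM x))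
  have hw : Continuous w := hu.sub continuous_const
  -- `w` has the increments of `u` and vanishes at `x`, so `‖w z‖ ≤ H |z - x| ^ β`
  have hdiff : (gaussianPDFReal 0 v ⋆[lsmul ℝ ℝ] u) x - (gaussianPDFReal 0 v ⋆[lsmul ℝ ℝ] u) y =
      (gaussianPDFReal 0 v ⋆[lsmul ℝ ℝ] w) x - (gaussianPDFReal 0 v ⋆[lsmul ℝ ℝ] w) y := by
    rw [convolution_sub_const hK hK1 hu hM, convolution_sub_const hK hK1 hu hM]
    abel
  rw [hdiff, ← Real.norm_eq_abs]
  refine Convex.norm_image_sub_le_of_norm_hasDerivWithin_le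
    (fun s _ => (hasDerivAt_gaussianPDFReal_convolution hv hw hwM s).hasDerivWithinAt)
    (fun s hs => norm_integral_deriv_gaussianPDFReal_smul_le hv hβ0 hβ1 hH
      (fun z => hHol z x) (Metric.mem_closedBall.mp hs)) (convex_closedBall x √v)
    (Metric.mem_closedBall.mpr (by rwa [Real.dist_eq, abs_sub_comm]))
    (Metric.mem_closedBall_self (sqrt_nonneg _))

lemma hasSum_intervalIntegral_comp_add_int_mul {f : ℝ → E} (hf : Integrable f) {P : ℝ}
    (hP : 0 < P) : HasSum (fun n : ℤ => ∫ w in (0 : ℝ)..P, f (w + n * P)) (∫ w, f w) := by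
  have h := hasSum_integral_iUnion (fun _ => measurableSet_Ioc) (Set.pairwise_disjoint_Ioc_zsmul P)
    hf.integrableOn
  rw [iUnion_Ioc_zsmul hP, setIntegral_univ] at h
  refine h.congr_fun fun n => ?_
  rw [intervalIntegral.integral_comp_add_right, zero_add,
    intervalIntegral.integral_of_le (by linarith), add_zsmul, one_zsmul, zsmul_eq_mul, add_comm P]

lemma intervalIntegral_tsum_comp_add_int_mul {f : ℝ → E} (hf : Integrable f) {P : ℝ}
    (hP : 0 < P) : ∫ w in (0 : ℝ)..P, ∑' n : ℤ, f (w + n * P) = ∫ w, f w := by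
  have hsum := (hasSum_intervalIntegral_comp_add_int_mul hf.norm hP).summable
  simp only [intervalIntegral.integral_of_le hP.le] at hsum ⊢
  rw [← integral_tsum_of_summable_integral_norm
    (fun n : ℤ => (hf.comp_add_right (n * P)).integrableOn) hsum,
    ← (hasSum_intervalIntegral_comp_add_int_mul hf hP).tsum_eq]
  simp only [intervalIntegral.integral_of_le hP.le]

end

lemma heatKernel_eq_tsum (v : ℝ≥0) (w : ℝ) :
    heatKernel v w = ∑' n : ℤ, gaussianPDFReal 0 v (w - 2 * π * n) := by
  simp only [heatKernel, gaussianPDFReal, sub_zero, one_div, tsum_mul_left]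

lemma summable_gaussianPDFReal_sub_two_pi_mul {v : ℝ≥0} (hv : v ≠ 0) (w : ℝ) :
    Summable fun n : ℤ => gaussianPDFReal 0 v (w - 2 * π * n) := by
  refine ((HurwitzKernelBounds.summable_f_int 0 (-(w / (2 * π)))
    (by positivity : 0 < 2 * π / v)).mul_left (√(2 * π * v))⁻¹).congr fun n => ?_
  simp only [HurwitzKernelBounds.f_int, pow_zero, one_mul, gaussianPDFReal, sub_zero]
  congr 2
  field_simp
  ring

lemma heatSemigroup_eq_gaussianPDFReal_convolution {d : ℕ} {v : ℝ≥0} (hv : v ≠ 0)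
    {u : ℝ → EuclideanSpace ℝ (Fin d)} (hu : Continuous u) {M : ℝ} (hM : ∀ z, ‖u z‖ ≤ M)
    (hper : Function.Periodic u (2 * π)) (x : ℝ) :
    heatSemigroup v u x = (gaussianPDFReal 0 v ⋆[lsmul ℝ ℝ] u) x := by
  have hf : Integrable fun z => gaussianPDFReal 0 v (x - z) • u z :=
    ((integrable_gaussianPDFReal 0 v).comp_sub_left x).smul_bdd M hu.aestronglyMeasurable
      (ae_of_all _ hM)
  rw [convolution_lsmul_swap, ← intervalIntegral_tsum_comp_add_int_mul hf two_pi_pos]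
  refine intervalIntegral.integral_congr fun y _ => ?_
  simp only [hper.int_mul _ y]
  rw [heatKernel_eq_tsum, ← (summable_gaussianPDFReal_sub_two_pi_mul hv _).tsum_smul_const]
  congr 1 with n
  ring_nf

lemma le_of_holder_bound_of_lipschitz_bound {a r t A β γ : ℝ} (hr : 0 < r) (ht : 0 < t)
    (hβγ : β ≤ γ) (hγ1 : γ ≤ 1) (hA : 0 ≤ A) (hfar : a ≤ A * r ^ β)
    (hnear : r ≤ √t → a ≤ A * t ^ ((β - 1) / 2) * r) :
    a ≤ A * t ^ (-(γ - β) / 2) * r ^ γ := by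
  have hsqrt : ∀ p : ℝ, √t ^ p = t ^ (p / 2) := fun p => by
    rw [sqrt_eq_rpow, ← rpow_mul ht.le]; ring_nf
  rw [show -(γ - β) / 2 = (β - γ) / 2 by ring, ← hsqrt]
  rcases le_total r √t with hrt | htr
  · calc a ≤ A * √t ^ (β - 1) * r := by rw [hsqrt]; exact hnear hrt
      _ = A * √t ^ (β - 1) * r ^ (1 - γ) * r ^ γ := by
        rw [mul_assoc _ (r ^ _), ← rpow_add hr]; norm_num
      _ ≤ A * √t ^ (β - 1) * √t ^ (1 - γ) * r ^ γ := by
        gcongr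
      _ = A * √t ^ (β - γ) * r ^ γ := by
        rw [mul_assoc A, ← rpow_add (sqrt_pos.mpr ht)]; ring_nf
  · calc a ≤ A * r ^ β := hfar
      _ = A * r ^ (β - γ) * r ^ γ := by rw [mul_assoc, ← rpow_add hr]; ring_nf
      _ ≤ A * √t ^ (β - γ) * r ^ γ := by
        gcongr A * ?_ * _
        exact rpow_le_rpow_of_nonpos (sqrt_pos.mpr ht) htr (by linarith)

lemma holderR_nonneg (β : ℝ) {E : Type*} [NormedAddCommGroup E] (u : ℝ → E) :
    0 ≤ holderR β u :=
  Real.iSup_nonneg fun _ => div_nonneg (norm_nonneg _) (rpow_nonneg (abs_nonneg _) _)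

lemma norm_sub_le_holderR_mul {β : ℝ} {E : Type*} [NormedAddCommGroup E] {u : ℝ → E}
    (hu : BddAbove (Set.range fun p : {q : ℝ × ℝ // q.1 ≠ q.2} =>
      ‖u p.1.1 - u p.1.2‖ / |p.1.1 - p.1.2| ^ β)) (a b : ℝ) :
    ‖u a - u b‖ ≤ holderR β u * |a - b| ^ β := by
  rcases eq_or_ne a b with rfl | hab
  · simpa using mul_nonneg (holderR_nonneg β u) (rpow_nonneg (abs_nonneg (a - a)) β)
  · rw [← div_le_iff₀ (rpow_pos_of_pos (abs_pos.mpr (sub_ne_zero.mpr hab)) β)]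
    exact le_ciSup hu ⟨(a, b), hab⟩

/-- Smoothing estimate for the periodic heat semigroup: for
`0 < β ≤ γ ≤ 1` there is `C = C(β,γ)` with
`‖S_t u₀‖_γ ≤ C t^{-(γ-β)/2} (‖u₀‖_∞ + ‖u₀‖_β)` for all `t ∈ (0,1]` and all bounded
continuous `2π`-periodic `u₀ : ℝ → ℝ^d` of finite `β`-Hölder seminorm. -/
theorem heatSemigroup_holder_smoothing
    (β γ : ℝ) (hβ0 : 0 < β) (hβγ : β ≤ γ) (hγ1 : γ ≤ 1) :
    ∃ C : ℝ, ∀ t ∈ Set.Ioc (0 : ℝ) 1, ∀ d : ℕ, 1 ≤ d →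
      ∀ u₀ : ℝ → EuclideanSpace ℝ (Fin d), Continuous u₀ →
        BddAbove (Set.range fun y : ℝ => ‖u₀ y‖) →
        (∀ y, u₀ (y + 2 * Real.pi) = u₀ y) →
        BddAbove (Set.range fun p : {q : ℝ × ℝ // q.1 ≠ q.2} =>
          ‖u₀ p.1.1 - u₀ p.1.2‖ / |p.1.1 - p.1.2| ^ β) →
        ∀ x y : ℝ, x ≠ y →
          ‖heatSemigroup t u₀ x - heatSemigroup t u₀ y‖ / |x - y| ^ γ
            ≤ C * t ^ (-(γ - β) / 2) * ((⨆ z : ℝ, ‖u₀ z‖) + holderR β u₀) := by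
  refine ⟨12, fun t ⟨ht, _⟩ d _ u hu hbdd hper hbddH x y hxy => ?_⟩
  lift t to ℝ≥0 using ht.le
  have hv : t ≠ 0 := by exact_mod_cast ht.ne'
  have hM : ∀ z, ‖u z‖ ≤ ⨆ z, ‖u z‖ := le_ciSup hbdd
  have hH := holderR_nonneg β u
  have hHol := norm_sub_le_holderR_mul hbddH
  have hr : 0 < |x - y| := abs_pos.mpr (sub_ne_zero.mpr hxy)
  rw [div_le_iff₀ (rpow_pos_of_pos hr γ),
    heatSemigroup_eq_gaussianPDFReal_convolution hv hu hM hper x,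
    heatSemigroup_eq_gaussianPDFReal_convolution hv hu hM hper y]
  have hfar := norm_convolution_sub_le (integrable_gaussianPDFReal 0 t)
    (gaussianPDFReal_nonneg 0 t) (integral_gaussianPDFReal_eq_one 0 hv) hu hM
    (fun z => (hHol (x - z) (y - z)).trans_eq (by rw [sub_sub_sub_cancel_right]))
  have hnear := fun h : |x - y| ≤ √t =>
    norm_gaussianPDFReal_convolution_sub_le_of_abs_sub_le_sqrt hv hβ0.le (hβγ.trans hγ1) hH hu hM
      hHol h
  refine (le_of_holder_bound_of_lipschitz_bound hr ht hβγ hγ1 (by positivity)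
    (hfar.trans (by nlinarith [rpow_nonneg hr.le β])) hnear).trans ?_
  have hM0 : 0 ≤ ⨆ z, ‖u z‖ := (norm_nonneg _).trans (hM 0)
  refine mul_le_mul_of_nonneg_right ?_ (rpow_nonneg hr.le γ)
  nlinarith [mul_nonneg (rpow_nonneg t.coe_nonneg (-(γ - β) / 2)) hM0]
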